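/- For every Dyck word x of length 2k, the sequence P(x) = (x_0, x_1, ..., x_{2k}), where x_0 = x and x_i is obtained from x_{i−1} by flipping the bit at position a_i (with π(x) = (a_1,...,a_{2k})), is a path in the graph G_k that starts at x and ends at the complement x̄ of x. -/

import Mathlib

/-- `x ∈ B_k`: bitstring of length `2k` with weight `k` or `k+1`. -/
def inB (k : ℕ) (x : List Bool) : Prop :=
  x.length = 2*k ∧ (x.count true = k ∨ x.count true = k+1)

/-- Dyck word: equally many 1s and 0s, every prefix has at least as many 1s as 0s. -/
def isDyck (x : List Bool) : Prop :=
  x.count true = x.count false ∧ ∀ n, (x.take n).count false ≤ (x.take n).count true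

/-- Complement of the reverse. -/
def mirror (x : List Bool) : List Bool := x.reverse.map (fun b => !b)

/-- Bitwise complement. -/
def compl (x : List Bool) : List Bool := x.map (fun b => !b)

/-- Specification of the recursively defined bit-flip sequence `π`. -/
def IsPiFun (π : List Bool → List ℕ) : Prop :=
  π [] = [] ∧ ∀ u v : List Bool, isDyck u → isDyck v →
    π (true :: u ++ false :: v) =
      (u.length + 2) :: ((π (mirror u)).map (fun a => u.length + 2 - a))
        ++ 1 :: ((π v).map (fun a => u.length + 2 + a))

/-- Flip the bit at (1-indexed) position `a`. -/
def flipBit (y : List Bool) (a : ℕ) : List Bool := y.set (a-1) (!(y.getD (a-1) false))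

/-- The path `P(x)`, as the list of vertices obtained by flipping bits in order `π x`. -/
def pathOf (π : List Bool → List ℕ) (x : List Bool) : List (List Bool) :=
  List.scanl flipBit x (π x)

/-- Adjacency in `G_k`: both vertices in `B_k`, differing in exactly one position. -/
def GkAdj (k : ℕ) (x y : List Bool) : Prop :=
  inB k x ∧ inB k y ∧ (List.range (2*k)).countP (fun i => x.getD i false != y.getD i false) = 1

/-- Adjacency in `G_k^+`: a `G_k` edge or a complement edge. -/
def GkPlusAdj (k : ℕ) (x y : List Bool) : Prop :=
  GkAdj k x y ∨ (inB k x ∧ inB k y ∧ (y = compl x ∨ x = compl y))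

/-!
A nonempty Dyck word factors as `x = 1u0v` with `u`, `v` Dyck (first return to the diagonal).
The first flip, at position `|u|+2`, turns `x` into `1u1v = 1·mirror(mirror u)·1v`. The next
segment of `π x` is `π (mirror u)` reflected into positions `2, …, |u|+1`, and flipping commutes
with `mirror` at reflected positions, so the path runs `P(mirror u)` inside that block and arrives
at `1ū1v`. Flipping bit 1 gives `0ū1v`, and the last segment runs `P(v)` inside the final block,
arriving at `0ū1v̄ = x̄`. By induction both sub-paths keep the weight in `{|x|/2, |x|/2 + 1}` and
have distinct vertices; they are told apart from each other by the first bit, and from `x` by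
the bit at position `|u|+2`.
-/
lemma count_map_not (l : List Bool) (b : Bool) : (l.map (fun b => !b)).count b = l.count (!b) := by
  simpa using List.count_map_of_injective l (fun b => !b) Bool.not_injective (!b)

lemma compl_def (l : List Bool) : compl l = l.map (fun b => !b) := rfl

lemma length_mirror (l : List Bool) : (mirror l).length = l.length := by simp [mirror]

lemma length_compl (l : List Bool) : (compl l).length = l.length := by simp [compl_def]

lemma count_mirror (l : List Bool) (b : Bool) : (mirror l).count b = l.count (!b) := by
  rw [mirror, count_map_not, List.count_reverse]

lemma count_compl (l : List Bool) (b : Bool) : (compl l).count b = l.count (!b) :=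
  count_map_not l b

lemma mirror_mirror (l : List Bool) : mirror (mirror l) = l := by
  simp [mirror, List.map_reverse, Function.comp_def]

lemma compl_mirror (l : List Bool) : compl (mirror l) = l.reverse := by
  simp [mirror, compl_def, Function.comp_def]

lemma mirror_reverse (l : List Bool) : mirror l.reverse = compl l := by
  simp [mirror, compl_def]

lemma length_flipBit (y : List Bool) (a : ℕ) : (flipBit y a).length = y.length := by
  simp [flipBit]

lemma flipBit_cons_one (b : Bool) (l : List Bool) : flipBit (b :: l) 1 = (!b) :: l := by
  simp [flipBit]

lemma flipBit_cons_succ (b : Bool) (l : List Bool) {a : ℕ} (h : 1 ≤ a) :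
    flipBit (b :: l) (a + 1) = b :: flipBit l a := by
  obtain ⟨a, rfl⟩ := Nat.exists_eq_add_of_le h
  simp [flipBit, Nat.add_comm 1 a]

lemma flipBit_append_of_le (p q : List Bool) {a : ℕ} (h1 : 1 ≤ a) (h : a ≤ p.length) :
    flipBit (p ++ q) a = flipBit p a ++ q := by
  have hlt : a - 1 < p.length := by omega
  rw [flipBit, flipBit, List.getD_append _ _ _ _ hlt, List.set_append, if_pos hlt]

lemma flipBit_append_of_lt (p q : List Bool) {a : ℕ} (h : p.length < a) :
    flipBit (p ++ q) a = p ++ flipBit q (a - p.length) := by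
  rw [flipBit, flipBit, List.getD_append_right _ _ _ _ (by omega), List.set_append,
    if_neg (by omega), show a - p.length - 1 = a - 1 - p.length by omega]

lemma flipBit_map_not (l : List Bool) (a : ℕ) :
    flipBit (l.map (fun b => !b)) a = (flipBit l a).map (fun b => !b) := by
  by_cases h : a - 1 < l.length
  · simp [flipBit, List.getD_eq_getElem?_getD, h]
  · have h' : l.length ≤ a - 1 := by omega
    simp [flipBit, List.set_eq_of_length_le, h']

lemma getD_flipBit {y : List Bool} {a : ℕ} (i : ℕ) (h : a - 1 < y.length) :
    (flipBit y a).getD i false = if i = a - 1 then !y.getD i false else y.getD i false := by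
  by_cases hi : i = a - 1
  · simp [flipBit, List.getD_eq_getElem?_getD, hi, h]
  · simp [flipBit, List.getD_eq_getElem?_getD, hi, Ne.symm hi]

lemma flipBit_reverse (l : List Bool) {a : ℕ} (h1 : 1 ≤ a) (h2 : a ≤ l.length) :
    flipBit l.reverse (l.length + 1 - a) = (flipBit l a).reverse := by
  apply List.ext_getElem (by simp [flipBit])
  intro i hi _
  simp only [List.length_set, List.length_reverse, flipBit] at hi
  simp only [flipBit, List.getElem_set, List.getElem_reverse, List.length_set,
    List.getD_eq_getElem?_getD,
    List.getElem?_reverse (show l.length + 1 - a - 1 < l.length by omega)]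
  by_cases hi' : i = l.length - a
  · subst hi'
    simp [show l.length + 1 - a - 1 = l.length - a by omega,
      show l.length - 1 - (l.length - a) = a - 1 by omega]
  · rw [if_neg (by omega), if_neg (by omega)]

lemma flipBit_mirror (l : List Bool) {a : ℕ} (h1 : 1 ≤ a) (h2 : a ≤ l.length) :
    flipBit (mirror l) (l.length + 1 - a) = mirror (flipBit l a) := by
  rw [mirror, mirror, flipBit_map_not, flipBit_reverse l h1 h2]

lemma isDyck_mirror {u : List Bool} (hu : isDyck u) : isDyck (mirror u) := by
  refine ⟨by simp [count_mirror, hu.1], fun n => ?_⟩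
  have hsplit : ∀ b, (u.take (u.length - n)).count b + (u.drop (u.length - n)).count b =
      u.count b := fun b => by rw [← List.count_append, List.take_append_drop]
  have := hu.2 (u.length - n)
  have := hsplit true
  have := hsplit false
  have := hu.1
  rw [mirror, ← List.map_take, List.take_reverse, count_map_not, count_map_not, Bool.not_true,
    Bool.not_false, List.count_reverse, List.count_reverse]
  omega

lemma isDyck.drop {x : List Bool} (hx : isDyck x) {n : ℕ}
    (hn : (x.take n).count true = (x.take n).count false) : isDyck (x.drop n) := by
  have hsplit : ∀ b, (x.take n).count b + (x.drop n).count b = x.count b :=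
    fun b => by rw [← List.count_append, List.take_append_drop]
  have := hsplit true
  have := hsplit false
  refine ⟨by have := hx.1; omega, fun j => ?_⟩
  have := hx.2 (n + j)
  rw [List.take_add, List.count_append, List.count_append] at this
  omega

lemma exists_eq_true_cons_append_false {p : List Bool} (hne : p ≠ [])
    (hbal : p.count true = p.count false)
    (hpos : ∀ m, 0 < m → m < p.length → (p.take m).count false < (p.take m).count true) :
    ∃ u, p = true :: u ++ [false] ∧ isDyck u := by
  obtain ⟨b, w, rfl⟩ := List.exists_cons_of_ne_nil hne
  obtain rfl | ⟨u, c, rfl⟩ := List.eq_nil_or_concat w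
  · cases b <;> simp at hbal
  rw [List.concat_eq_append] at hbal hpos ⊢
  obtain rfl : b = true := by
    have := hpos 1 (by omega) (by simp)
    cases b <;> simp_all
  have hprefix : ∀ j ≤ u.length, (u.take j).count false ≤ (u.take j).count true := by
    intro j hj
    have h := hpos (j + 1) (by omega) (by simp; omega)
    rw [List.take_succ_cons, List.take_append_of_le_length hj,
      List.count_cons_of_ne (by decide), List.count_cons_self] at h
    omega
  have hu := hprefix u.length le_rfl
  rw [List.take_length] at hu
  obtain rfl : c = false := by
    by_contra hc
    rw [Bool.not_eq_false] at hc
    subst hc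
    simp at hbal
    omega
  refine ⟨u, rfl, by simpa using hbal, fun j => ?_⟩
  rcases le_or_gt j u.length with hj | hj
  · exact hprefix j hj
  · rw [List.take_of_length_le hj.le]
    exact hu

lemma isDyck.exists_eq_true_cons_append {x : List Bool} (hx : isDyck x) (hne : x ≠ []) :
    ∃ u v, isDyck u ∧ isDyck v ∧ x = true :: u ++ false :: v := by
  classical
  have hex : ∃ n, 0 < n ∧ (x.take n).count true = (x.take n).count false :=
    ⟨x.length, List.length_pos_iff.2 hne, by simp [hx.1]⟩
  obtain ⟨hn0, hbal⟩ := Nat.find_spec hex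
  have hpos : ∀ m, 0 < m → m < (x.take (Nat.find hex)).length →
      ((x.take (Nat.find hex)).take m).count false <
        ((x.take (Nat.find hex)).take m).count true := by
    intro m hm0 hm
    rw [List.length_take, lt_min_iff] at hm
    rw [List.take_take, min_eq_left hm.1.le]
    have hunbal := Nat.find_min hex hm.1
    have := hx.2 m
    omega
  generalize Nat.find hex = n at hn0 hbal hpos
  obtain ⟨u, hp, hu⟩ := exists_eq_true_cons_append_false
    (List.ne_nil_of_length_pos (by simp [hn0, List.length_pos_iff.2 hne])) hbal hpos
  refine ⟨u, x.drop n, hu, hx.drop hbal, ?_⟩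
  conv_lhs => rw [← List.take_append_drop n x, hp]
  simp

@[elab_as_elim]
theorem isDyck_induction {P : List Bool → Prop} (nil : P [])
    (step : ∀ u v, isDyck u → isDyck v → P (mirror u) → P v → P (true :: u ++ false :: v))
    {x : List Bool} (hx : isDyck x) : P x := by
  induction h : x.length using Nat.strong_induction_on generalizing x with
  | _ n ih =>
    rcases eq_or_ne x [] with rfl | hne
    · exact nil
    obtain ⟨u, v, hu, hv, rfl⟩ := hx.exists_eq_true_cons_append hne
    simp only [List.cons_append, List.length_cons, List.length_append] at h
    exact step u v hu hv (ih _ (by omega) (isDyck_mirror hu) (length_mirror u))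
      (ih _ (by omega) hv rfl)

lemma countP_getD_ne_flipBit {y : List Bool} {n a : ℕ} (hy : y.length = n) (h1 : 1 ≤ a)
    (h2 : a ≤ n) :
    (List.range n).countP (fun i => y.getD i false != (flipBit y a).getD i false) = 1 := by
  have hcongr : (List.range n).countP (fun i => y.getD i false != (flipBit y a).getD i false) =
      (List.range n).count (a - 1) := by
    rw [List.count_eq_countP]
    apply List.countP_congr
    intro i _
    rw [getD_flipBit i (by omega)]
    by_cases hi : i = a - 1 <;> simp [hi]
  rw [hcongr]
  exact List.count_eq_one_of_mem List.nodup_range (List.mem_range.2 (by omega))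

lemma gkAdj_flipBit {k a : ℕ} {y : List Bool} (hy : inB k y) (hy' : inB k (flipBit y a))
    (h1 : 1 ≤ a) (h2 : a ≤ 2 * k) : GkAdj k y (flipBit y a) :=
  ⟨hy, hy', countP_getD_ne_flipBit hy.1 h1 h2⟩

lemma self_mem_scanl {α β : Type*} (f : β → α → β) (b : β) (l : List α) :
    b ∈ List.scanl f b l :=
  List.mem_of_mem_head? List.head?_scanl

lemma isChain_gkAdj_scanl_flipBit {k : ℕ} {l : List ℕ}
    (hl : ∀ a ∈ l, 1 ≤ a ∧ a ≤ 2 * k) {y : List Bool}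
    (hB : ∀ z ∈ List.scanl flipBit y l, inB k z) :
    List.IsChain (GkAdj k) (List.scanl flipBit y l) := by
  induction l generalizing y with
  | nil => exact List.isChain_singleton y
  | cons a l ih =>
    rw [List.scanl_cons] at hB ⊢
    refine List.isChain_cons.2 ⟨?_, ih (fun b hb => hl b (by simp [hb]))
      (fun z hz => hB z (List.mem_cons_of_mem _ hz))⟩
    intro z hz
    rw [List.head?_scanl, Option.mem_some_iff] at hz
    subst hz
    exact gkAdj_flipBit (hB y List.mem_cons_self)
      (hB _ (List.mem_cons_of_mem _ (self_mem_scanl _ _ _))) (hl a (by simp)).1 (hl a (by simp)).2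

lemma length_of_mem_scanl_flipBit {l : List ℕ} {y z : List Bool}
    (hz : z ∈ List.scanl flipBit y l) : z.length = y.length := by
  induction l generalizing y with
  | nil => simp_all
  | cons a l ih =>
    rw [List.scanl_cons, List.mem_cons] at hz
    rcases hz with rfl | hz
    · rfl
    · rw [ih hz, length_flipBit]

lemma scanl_map_eq_map_scanl {α β : Type*} {f : β → α → β} {g : β → β} {h : α → α}
    {p : β → Prop} {l : List α} (hp : ∀ b, p b → ∀ a ∈ l, p (f b a))
    (hcomm : ∀ b, p b → ∀ a ∈ l, f (g b) (h a) = g (f b a)) {b : β} (hb : p b) :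
    List.scanl f (g b) (l.map h) = (List.scanl f b l).map g := by
  induction l generalizing b with
  | nil => simp
  | cons a l ih =>
    rw [List.map_cons, List.scanl_cons, List.scanl_cons, List.map_cons,
      hcomm b hb a List.mem_cons_self,
      ih (fun b hb a ha => hp b hb a (List.mem_cons_of_mem _ ha))
        (fun b hb a ha => hcomm b hb a (List.mem_cons_of_mem _ ha))
        (hp b hb a List.mem_cons_self)]

lemma length_of_mem_pathOf {π : List Bool → List ℕ} {x y : List Bool}
    (hy : y ∈ pathOf π x) : y.length = x.length :=
  length_of_mem_scanl_flipBit hy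

def embedLeft (v y : List Bool) : List Bool := true :: (mirror y ++ true :: v)

def embedRight (u w : List Bool) : List Bool := false :: (compl u ++ true :: w)

lemma embedLeft_injective (v : List Bool) : Function.Injective (embedLeft v) := by
  intro y y' h
  simp only [embedLeft, List.cons.injEq, List.append_cancel_right_eq, true_and] at h
  rw [← mirror_mirror y, h, mirror_mirror]

lemma embedRight_injective (u : List Bool) : Function.Injective (embedRight u) := by
  intro w w' h
  simpa [embedRight] using h

lemma embedLeft_ne_embedRight (u v y w : List Bool) : embedLeft v y ≠ embedRight u w := by
  simp [embedLeft, embedRight]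

lemma count_true_embedLeft (v y : List Bool) :
    (embedLeft v y).count true = y.count false + v.count true + 2 := by
  rw [embedLeft, List.count_cons_self, List.count_append, List.count_cons_self, count_mirror,
    Bool.not_true]
  omega

lemma count_true_embedRight (u w : List Bool) :
    (embedRight u w).count true = u.count false + w.count true + 1 := by
  rw [embedRight, List.count_cons_of_ne (by decide), List.count_append, List.count_cons_self,
    count_compl, Bool.not_true]
  omega

lemma flipBit_true_cons_append (u v : List Bool) :
    flipBit (true :: u ++ false :: v) (u.length + 2) = embedLeft v (mirror u) := by
  rw [embedLeft, mirror_mirror, List.cons_append, flipBit_cons_succ _ _ (by omega),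
    flipBit_append_of_lt _ _ (by omega), show u.length + 1 - u.length = 1 by omega,
    flipBit_cons_one, Bool.not_false]

lemma flipBit_embedLeft_one (u v : List Bool) :
    flipBit (embedLeft v (compl (mirror u))) 1 = embedRight u v := by
  rw [embedLeft, embedRight, compl_mirror, mirror_reverse, flipBit_cons_one, Bool.not_true]

lemma flipBit_embedLeft (v : List Bool) {y : List Bool} {a : ℕ} (h1 : 1 ≤ a)
    (h2 : a ≤ y.length) :
    flipBit (embedLeft v y) (y.length + 2 - a) = embedLeft v (flipBit y a) := by
  rw [embedLeft, embedLeft, show y.length + 2 - a = (y.length + 1 - a) + 1 by omega,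
    flipBit_cons_succ _ _ (by omega),
    flipBit_append_of_le _ _ (by omega) (by rw [length_mirror]; omega), flipBit_mirror y h1 h2]

lemma flipBit_embedRight (u : List Bool) {w : List Bool} {a : ℕ} (h1 : 1 ≤ a) :
    flipBit (embedRight u w) (u.length + 2 + a) = embedRight u (flipBit w a) := by
  rw [embedRight, embedRight, show u.length + 2 + a = (u.length + 1 + a) + 1 by omega,
    flipBit_cons_succ _ _ (by omega), flipBit_append_of_lt _ _ (by rw [length_compl]; omega),
    length_compl, show u.length + 1 + a - u.length = a + 1 by omega, flipBit_cons_succ _ _ h1]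

namespace IsPiFun

variable {π : List Bool → List ℕ}

lemma length_eq (hπ : IsPiFun π) {x : List Bool} (hx : isDyck x) : (π x).length = x.length := by
  refine isDyck_induction ?_ ?_ hx
  · simp [hπ.1]
  · intro u v hu hv ihu ihv
    rw [hπ.2 u v hu hv]
    simp only [List.cons_append, List.length_cons, List.length_append, List.length_map,
      length_mirror, ihu, ihv]

lemma one_le_and_le_length (hπ : IsPiFun π) {x : List Bool} (hx : isDyck x) :
    ∀ a ∈ π x, 1 ≤ a ∧ a ≤ x.length := by
  refine isDyck_induction ?_ ?_ hx
  · simp [hπ.1]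
  · intro u v hu hv ihu ihv a ha
    rw [length_mirror] at ihu
    rw [hπ.2 u v hu hv] at ha
    simp only [List.mem_cons, List.mem_append, List.mem_map] at ha
    simp only [List.cons_append, List.length_cons, List.length_append]
    rcases ha with (rfl | ⟨b, hb, rfl⟩) | rfl | ⟨b, hb, rfl⟩
    · omega
    · have := ihu b hb; omega
    · omega
    · have := ihv b hb; omega

lemma scanl_embedLeft (hπ : IsPiFun π) {u : List Bool} (hu : isDyck u) (v : List Bool) :
    List.scanl flipBit (embedLeft v (mirror u)) ((π (mirror u)).map (fun a => u.length + 2 - a)) =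
      (pathOf π (mirror u)).map (embedLeft v) := by
  refine scanl_map_eq_map_scanl (p := fun y => y.length = u.length)
    (fun y hy a _ => by rw [length_flipBit, hy]) (fun y hy a ha => ?_) (length_mirror u)
  have := hπ.one_le_and_le_length (isDyck_mirror hu) a ha
  rw [length_mirror] at this
  rw [← hy, flipBit_embedLeft v this.1 (by omega)]

lemma scanl_embedRight (hπ : IsPiFun π) (u : List Bool) {v : List Bool} (hv : isDyck v) :
    List.scanl flipBit (embedRight u v) ((π v).map (fun a => u.length + 2 + a)) =
      (pathOf π v).map (embedRight u) :=
  scanl_map_eq_map_scanl (p := fun _ => True) (fun _ _ _ _ => trivial)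
    (fun _ _ a ha => flipBit_embedRight u (hπ.one_le_and_le_length hv a ha).1) trivial

lemma pathOf_true_cons_append_of_getLast? (hπ : IsPiFun π) {u v : List Bool} (hu : isDyck u)
    (hv : isDyck v) (hlast : (pathOf π (mirror u)).getLast? = some (compl (mirror u))) :
    pathOf π (true :: u ++ false :: v) = (true :: u ++ false :: v) ::
      ((pathOf π (mirror u)).map (embedLeft v) ++ (pathOf π v).map (embedRight u)) := by
  have hfold : List.foldl flipBit (embedLeft v (mirror u))
      ((π (mirror u)).map (fun a => u.length + 2 - a)) = embedLeft v (compl (mirror u)) := by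
    have := congrArg List.getLast? (hπ.scanl_embedLeft hu v)
    rwa [List.getLast?_scanl, List.getLast?_map, hlast, Option.map_some, Option.some_inj] at this
  rw [pathOf, hπ.2 u v hu hv, List.scanl_append, List.scanl_cons, List.foldl_cons,
    flipBit_true_cons_append, hπ.scanl_embedLeft hu v, hfold, List.scanl_cons, List.tail_cons,
    flipBit_embedLeft_one, hπ.scanl_embedRight u hv, List.cons_append]

lemma getLast?_pathOf (hπ : IsPiFun π) {x : List Bool} (hx : isDyck x) :
    (pathOf π x).getLast? = some (compl x) := by
  refine isDyck_induction ?_ ?_ hx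
  · simp [pathOf, hπ.1, compl_def]
  · intro u v hu hv ihu ihv
    rw [hπ.pathOf_true_cons_append_of_getLast? hu hv ihu, List.getLast?_cons,
      List.getLast?_append, List.getLast?_map, ihv]
    simp [embedRight, compl_def]

lemma pathOf_true_cons_append (hπ : IsPiFun π) {u v : List Bool} (hu : isDyck u)
    (hv : isDyck v) :
    pathOf π (true :: u ++ false :: v) = (true :: u ++ false :: v) ::
      ((pathOf π (mirror u)).map (embedLeft v) ++ (pathOf π v).map (embedRight u)) :=
  hπ.pathOf_true_cons_append_of_getLast? hu hv (hπ.getLast?_pathOf (isDyck_mirror hu))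

lemma nodup_pathOf (hπ : IsPiFun π) {x : List Bool} (hx : isDyck x) : (pathOf π x).Nodup := by
  refine isDyck_induction ?_ ?_ hx
  · simp [pathOf, hπ.1]
  · intro u v hu hv ihu ihv
    rw [hπ.pathOf_true_cons_append hu hv, List.nodup_cons, List.nodup_append]
    refine ⟨?_, ihu.map (embedLeft_injective v), ihv.map (embedRight_injective u), ?_⟩
    · simp only [List.mem_append, List.mem_map, not_or, not_exists, not_and]
      refine ⟨fun y hy h => ?_, fun w _ h => by simp [embedRight] at h⟩
      have hlen : (mirror y).length = u.length := by
        rw [length_mirror, length_of_mem_pathOf hy, length_mirror]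
      simp only [embedLeft, List.cons_append, List.cons.injEq, true_and] at h
      simpa using (List.append_inj h hlen).2
    · simp only [List.mem_map]
      rintro _ ⟨y, _, rfl⟩ _ ⟨w, _, rfl⟩
      exact embedLeft_ne_embedRight u v y w

lemma count_true_of_mem_pathOf (hπ : IsPiFun π) {x : List Bool} (hx : isDyck x) :
    ∀ y ∈ pathOf π x, y.count true = x.count true ∨ y.count true = x.count true + 1 := by
  refine isDyck_induction ?_ ?_ hx
  · simp [pathOf, hπ.1]
  · intro u v hu hv ihu ihv y hy
    have hxc : (true :: u ++ false :: v).count true = u.count true + v.count true + 1 := by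
      simp
    rw [hπ.pathOf_true_cons_append hu hv] at hy
    simp only [List.mem_cons, List.mem_append, List.mem_map] at hy
    rcases hy with rfl | ⟨z, hz, rfl⟩ | ⟨w, hw, rfl⟩
    · exact Or.inl rfl
    · have hz₁ := ihu z hz
      have hz₂ := length_of_mem_pathOf hz
      rw [count_mirror, Bool.not_true] at hz₁
      rw [length_mirror] at hz₂
      have := List.count_true_add_count_false z
      have := List.count_true_add_count_false u
      have := hu.1
      rw [hxc, count_true_embedLeft]
      omega
    · have := ihv w hw
      have := hu.1
      rw [hxc, count_true_embedRight]
      omega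

end IsPiFun

theorem stmt_6 (π : List Bool → List ℕ) (hπ : IsPiFun π) (k : ℕ) (x : List Bool)
    (hx : isDyck x) (hl : x.length = 2*k) :
    (pathOf π x).length = 2*k + 1 ∧
    (pathOf π x).Nodup ∧
    List.Chain' (GkAdj k) (pathOf π x) ∧
    (pathOf π x).head? = some x ∧
    (pathOf π x).getLast? = some (compl x) ∧
    (∀ y ∈ pathOf π x, inB k y) := by
  have hxk : x.count true = k := by
    have := hx.1
    have := List.count_true_add_count_false x
    omega
  have hinB : ∀ y ∈ pathOf π x, inB k y := fun y hy =>
    ⟨by rw [length_of_mem_pathOf hy, hl], hxk ▸ hπ.count_true_of_mem_pathOf hx y hy⟩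
  have hbounds : ∀ a ∈ π x, 1 ≤ a ∧ a ≤ 2 * k := hl ▸ hπ.one_le_and_le_length hx
  exact ⟨by rw [pathOf, List.length_scanl, hπ.length_eq hx, hl], hπ.nodup_pathOf hx,
    isChain_gkAdj_scanl_flipBit hbounds hinB, List.head?_scanl, hπ.getLast?_pathOf hx, hinB⟩
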